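/- arXiv:2401.14277 — 3 statements merged into one kernel-verified Lean document; each statement's English description precedes it below -/
import Mathlib

section
/- Let A be a binary string and suppose s contains the substring A^k (k ≥ 2 copies of A concatenated). If every trace in a set T is obtained from s by deleting, among other symbols, at least one full copy of A from this A^k block, then T does not unambiguously reconstruct s: there is another binary string s' ≠ s of length |s| from which every trace in T can also arise as a subsequence. (Necessary condition 1.) -/
/-- `strPow A k` is the concatenation `A^k` of `k` copies of `A`. -/
def strPow (A : List Bool) (k : ℕ) : List Bool := (List.replicate k A).flatten

/-- **Necessary condition 1.** Suppose `s = u ++ A^k ++ v` with `A` nonempty and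
`k ≥ 2`, and every trace in `T` is obtained from `s` by deleting (among other
symbols) at least one full copy of `A` from the block `A^k`, i.e. every trace is
a subsequence of `u ++ A^(k-1) ++ v`. Then `T` does not unambiguously
reconstruct `s`: there is a binary string `s' ≠ s` of length `|s|` having every
element of `T` as a subsequence. -/
theorem not_unambiguous_of_power_deleted
    (A s u v : List Bool) (k : ℕ) (hA : A ≠ []) (hk : 2 ≤ k)
    (hs : s = u ++ strPow A k ++ v)
    (T : Set (List Bool))
    (hT : ∀ t ∈ T, t.Sublist (u ++ strPow A (k - 1) ++ v)) :
    ∃ s' : List Bool, s' ≠ s ∧ s'.length = s.length ∧ ∀ t ∈ T, t.Sublist s' := by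
  have hAlen : 0 < A.length := List.length_pos_iff.mpr hA
  have hslen : s.length = u.length + k * A.length + v.length := by
    simp [hs, strPow, List.length_flatten, List.map_replicate]
    ring
  have hsne : s ≠ [] := by
    intro h
    rw [h] at hslen
    simp at hslen
    nlinarith
  set c := s.getLast hsne with hc
  set b := !c with hb
  refine ⟨(u ++ strPow A (k - 1) ++ v) ++ List.replicate A.length b, ?_, ?_, ?_⟩
  · intro h
    have h1 : s.getLast? = some c := List.getLast?_eq_getLast hsne
    have h2 : ((u ++ strPow A (k - 1) ++ v) ++ List.replicate A.length b).getLast? = some b := by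
      rw [List.getLast?_append, List.getLast?_replicate]
      simp [hAlen.ne']
    rw [h, h1] at h2
    simp [hb] at h2
  · have : (k - 1) * A.length + A.length = k * A.length := by
      rw [Nat.sub_one_mul]
      have : A.length ≤ k * A.length := Nat.le_mul_of_pos_left _ (by omega)
      omega
    simp [hslen, strPow, List.length_flatten, List.map_replicate]
    omega
  · intro t ht
    exact (hT t ht).trans (List.sublist_append_left _ _)
end

section
/- Let A, B be distinct binary strings and a, b ≥ 1 integers. If s contains the substring A^a B^b (or B^b A^a) and every trace in T deletes a full copy of A or a full copy of B from this substring, then T does not unambiguously reconstruct s. (Necessary condition 3.) -/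
namespace List

variable {α : Type*}

theorem exists_ne_length_eq_sublist [Nontrivial α] (X s : List α) {n : ℕ} (h : X.length < n) :
    ∃ s', s' ≠ s ∧ s'.length = n ∧ X <+ s' := by
  obtain ⟨x, y, hxy⟩ := exists_pair_ne α
  have hpad : ∀ c : α, (X ++ replicate (n - X.length) c).length = n ∧
      X <+ X ++ replicate (n - X.length) c := fun c =>
    ⟨by simp only [length_append, length_replicate]; omega, sublist_append_left _ _⟩
  by_cases hx : X ++ replicate (n - X.length) x = s
  · refine ⟨X ++ replicate (n - X.length) y, ?_, hpad y⟩
    rw [← hx, Ne, append_right_inj, replicate_right_inj (by omega)]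
    exact hxy.symm
  · exact ⟨_, hx, hpad x⟩

theorem exists_sublist_of_append_comm {P Q A B : List α} (hAB : A ++ B = B ++ A)
    (hA : A ≠ []) (hB : B ≠ []) :
    ∃ X, X.length < (P ++ A ++ B ++ Q).length ∧ P ++ B ++ Q <+ X ∧ P ++ A ++ Q <+ X := by
  have hA' := length_pos_iff.mpr hA
  have hB' := length_pos_iff.mpr hB
  rcases prefix_or_prefix_of_prefix (prefix_append A B) (hAB ▸ prefix_append B A) with h | h
  · refine ⟨P ++ B ++ Q, by simp only [length_append]; omega, Sublist.refl _, ?_⟩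
    exact ((Sublist.refl P).append h.sublist).append (Sublist.refl Q)
  · refine ⟨P ++ A ++ Q, by simp only [length_append]; omega, ?_, Sublist.refl _⟩
    exact ((Sublist.refl P).append h.sublist).append (Sublist.refl Q)

theorem exists_ne_of_forall_sublist_delete [Nontrivial α] (P Q A B : List α)
    (hA : A ≠ []) (hB : B ≠ []) (T : Set (List α))
    (hT : ∀ t ∈ T, t <+ P ++ B ++ Q ∨ t <+ P ++ A ++ Q) :
    ∃ s', s' ≠ P ++ A ++ B ++ Q ∧ s'.length = (P ++ A ++ B ++ Q).length ∧
      ∀ t ∈ T, t <+ s' := by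
  by_cases hAB : A ++ B = B ++ A
  · obtain ⟨X, hlen, hBX, hAX⟩ := exists_sublist_of_append_comm (P := P) (Q := Q) hAB hA hB
    obtain ⟨s', hne, hs', hXs'⟩ := exists_ne_length_eq_sublist X (P ++ A ++ B ++ Q) hlen
    exact ⟨s', hne, hs', fun t ht => (hT t ht).elim (·.trans hBX |>.trans hXs')
      (·.trans hAX |>.trans hXs')⟩
  · refine ⟨P ++ B ++ A ++ Q, ?_, ?_, fun t ht => ?_⟩
    · rw [append_assoc P B, append_assoc P A, Ne, append_left_inj, append_right_inj]
      exact fun h => hAB h.symm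
    · simp only [length_append]; omega
    · have hBA : P ++ B ++ Q <+ P ++ B ++ A ++ Q := (sublist_append_left _ A).append_right Q
      have hAA : P ++ A ++ Q <+ P ++ B ++ A ++ Q := by
        simpa only [append_assoc] using
          (Sublist.refl P).append ((sublist_append_right B A).append_right Q)
      exact (hT t ht).elim (·.trans hBA) (·.trans hAA)

end List

theorem strPow_succ (A : List Bool) (k : ℕ) : strPow A (k + 1) = A ++ strPow A k := by
  simp [strPow, List.replicate_succ]

theorem strPow_succ' (A : List Bool) (k : ℕ) : strPow A (k + 1) = strPow A k ++ A := by
  simp [strPow, List.replicate_succ']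

theorem exists_ne_of_forall_sublist_strPow_pred (A B u v : List Bool) (a b : ℕ)
    (hA : A ≠ []) (hB : B ≠ []) (ha : 1 ≤ a) (hb : 1 ≤ b) (T : Set (List Bool))
    (hT : ∀ t ∈ T, t.Sublist (u ++ strPow A (a - 1) ++ strPow B b ++ v) ∨
                   t.Sublist (u ++ strPow A a ++ strPow B (b - 1) ++ v)) :
    ∃ s', s' ≠ u ++ strPow A a ++ strPow B b ++ v ∧
      s'.length = (u ++ strPow A a ++ strPow B b ++ v).length ∧ ∀ t ∈ T, t.Sublist s' := by
  obtain ⟨a, rfl⟩ := Nat.exists_eq_add_of_le' ha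
  obtain ⟨b, rfl⟩ := Nat.exists_eq_add_of_le' hb
  have key :=
    List.exists_ne_of_forall_sublist_delete (u ++ strPow A a) (strPow B b ++ v) A B hA hB T
  simp only [Nat.add_sub_cancel, strPow_succ' A, strPow_succ B, List.append_assoc] at hT key ⊢
  exact key hT

theorem not_unambiguous_of_AB_block_deleted_general
    (A B s u v : List Bool) (a b : ℕ) (hA : A ≠ []) (hB : B ≠ [])
    (ha : 1 ≤ a) (hb : 1 ≤ b) (T : Set (List Bool))
    (h : (s = u ++ strPow A a ++ strPow B b ++ v ∧
            ∀ t ∈ T, t.Sublist (u ++ strPow A (a - 1) ++ strPow B b ++ v) ∨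
                     t.Sublist (u ++ strPow A a ++ strPow B (b - 1) ++ v))
       ∨ (s = u ++ strPow B b ++ strPow A a ++ v ∧
            ∀ t ∈ T, t.Sublist (u ++ strPow B (b - 1) ++ strPow A a ++ v) ∨
                     t.Sublist (u ++ strPow B b ++ strPow A (a - 1) ++ v))) :
    ∃ s' : List Bool, s' ≠ s ∧ s'.length = s.length ∧ ∀ t ∈ T, t.Sublist s' := by
  rcases h with ⟨rfl, hT⟩ | ⟨rfl, hT⟩
  · exact exists_ne_of_forall_sublist_strPow_pred A B u v a b hA hB ha hb T hT
  · exact exists_ne_of_forall_sublist_strPow_pred B A u v b a hB hA hb ha T hT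

/-- **Necessary condition 3.** Suppose `A ≠ B` are nonempty, `a, b ≥ 1`, and `s`
contains the substring `A^a B^b` (or `B^b A^a`), i.e. `s = u ++ A^a ++ B^b ++ v`
(or `s = u ++ B^b ++ A^a ++ v`).  If every trace in `T` deletes a full copy of
`A` or a full copy of `B` from this substring, then `T` does not unambiguously
reconstruct `s`. -/
theorem not_unambiguous_of_AB_block_deleted
    (A B s u v : List Bool) (a b : ℕ) (hAB : A ≠ B) (hA : A ≠ []) (hB : B ≠ [])
    (ha : 1 ≤ a) (hb : 1 ≤ b) (T : Set (List Bool))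
    (h : (s = u ++ strPow A a ++ strPow B b ++ v ∧
            ∀ t ∈ T, t.Sublist (u ++ strPow A (a - 1) ++ strPow B b ++ v) ∨
                     t.Sublist (u ++ strPow A a ++ strPow B (b - 1) ++ v))
       ∨ (s = u ++ strPow B b ++ strPow A a ++ v ∧
            ∀ t ∈ T, t.Sublist (u ++ strPow B (b - 1) ++ strPow A a ++ v) ∨
                     t.Sublist (u ++ strPow B b ++ strPow A (a - 1) ++ v))) :
    ∃ s' : List Bool, s' ≠ s ∧ s'.length = s.length ∧ ∀ t ∈ T, t.Sublist s' :=
  not_unambiguous_of_AB_block_deleted_general A B s u v a b hA hB ha hb T h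
end

section
/- Let s have runs of lengths ℓ_1,...,ℓ_M, and generate T i.i.d. traces via Del_p. Let E_3 be the event that for every i ∈ {1,...,M} there exists a trace that fully preserves run i and fully deletes no run. Then P(E_3) = Σ_{c=0}^{T} C(T,c) · [∏_{i=1}^M (1 − (1 − (1−p)^{ℓ_i}/(1−p^{ℓ_i}))^c)] · q^c (1−q)^{T−c}, where q = ∏_{k=1}^M (1 − p^{ℓ_k}). -/
open MeasureTheory ENNReal

open Finset
open scoped Classical


namespace ProbE3aux

noncomputable def ind (P : Prop) : ℝ≥0∞ := if P then 1 else 0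

lemma ind_pos {P : Prop} (h : P) : ind P = 1 := if_pos h
lemma ind_neg {P : Prop} (h : ¬ P) : ind P = 0 := if_neg h
lemma ind_mul_eq_ite (P : Prop) (x : ℝ≥0∞) : ind P * x = if P then x else 0 := by
  by_cases h : P
  · rw [ind_pos h, if_pos h, one_mul]
  · rw [ind_neg h, if_neg h, zero_mul]
lemma ind_congr {P Q : Prop} (h : P ↔ Q) : ind P = ind Q := by
  by_cases hP : P
  · rw [ind_pos hP, ind_pos (h.1 hP)]
  · rw [ind_neg hP, ind_neg (fun hq => hP (h.2 hq))]
lemma ind_le_one {P : Prop} : ind P ≤ 1 := by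
  by_cases h : P
  · rw [ind_pos h]
  · rw [ind_neg h]; exact zero_le_one
lemma ind_ne_top {P : Prop} : ind P ≠ ∞ := ne_top_of_le_ne_top one_ne_top ind_le_one
lemma ind_mul_ind (P Q : Prop) : ind P * ind Q = ind (P ∧ Q) := by
  by_cases hP : P <;> by_cases hQ : Q <;>
    simp [ind_pos, ind_neg, hP, hQ, ind, and_comm]

lemma prod_ind {ι : Type*} [Fintype ι] (P : ι → Prop) :
    (∏ i, ind (P i)) = ind (∀ i, P i) := by
  by_cases h : ∀ i, P i
  · rw [ind_pos h]
    exact Finset.prod_eq_one fun i _ => ind_pos (h i)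
  · rw [ind_neg h]
    push_neg at h
    obtain ⟨i, hi⟩ := h
    exact Finset.prod_eq_zero (mem_univ i) (ind_neg hi)

/-- Sum over a finite dependent function space of a product factorizes. -/
lemma sum_pi_prod {ι : Type*} [Fintype ι] [DecidableEq ι] {β : ι → Type*} [∀ i, Fintype (β i)]
    (g : ∀ i, β i → ℝ≥0∞) :
    ∑ f : ∀ i, β i, ∏ i, g i (f i) = ∏ i, ∑ b, g i b :=
  (Fintype.prod_sum g).symm

lemma sum_ind_pi {ι : Type*} [Fintype ι] [DecidableEq ι] {β : ι → Type*} [∀ i, Fintype (β i)]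
    (P : ∀ i, β i → Prop) (g : ∀ i, β i → ℝ≥0∞) :
    ∑ f : ∀ i, β i, ind (∀ i, P i (f i)) * ∏ i, g i (f i)
      = ∏ i, ∑ b, ind (P i b) * g i b := by
  rw [Fintype.prod_sum]
  refine Fintype.sum_congr _ _ fun f => ?_
  rw [Finset.prod_mul_distrib, prod_ind]

lemma sum_ind_not {α : Type*} [Fintype α] (P : α → Prop) (g : α → ℝ≥0∞)
    (hfin : (∑ a, ind (P a) * g a) ≠ ∞) :
    ∑ a, ind (¬ P a) * g a = ∑ a, g a - ∑ a, ind (P a) * g a := by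
  refine ENNReal.eq_sub_of_add_eq hfin ?_
  rw [← Finset.sum_add_distrib]
  refine Fintype.sum_congr _ _ fun a => ?_
  by_cases h : P a
  · simp [ind_pos h, ind_neg (not_not_intro h)]
  · simp [ind_pos h, ind_neg h]

lemma sum_ind_eq {α : Type*} [Fintype α] (c₀ : α) (h : α → ℝ≥0∞) :
    ∑ c, ind (c = c₀) * h c = h c₀ := by
  rw [Finset.sum_eq_single_of_mem c₀ (mem_univ _)]
  · rw [ind_pos rfl, one_mul]
  · intro b _ hb
    rw [ind_neg hb, zero_mul]

lemma forall_split {α : Type*} (P Q : α → Prop) :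
    (∀ a, Q a) ↔ (∀ t : {a // P a}, Q t.1) ∧ (∀ t : {a // ¬ P a}, Q t.1) := by
  constructor
  · exact fun H => ⟨fun t => H t.1, fun t => H t.1⟩
  · rintro ⟨h1, h2⟩ a
    by_cases h : P a
    · exact h1 ⟨a, h⟩
    · exact h2 ⟨a, h⟩

/-- Splitting a sum over a function space along a predicate on the domain. -/
lemma sum_split {α : Type*} [Fintype α] [DecidableEq α] (P : α → Prop) {β : Type*} [Fintype β]
    (F : (α → β) → ℝ≥0∞) :
    ∑ f : α → β, F f
      = ∑ f₁ : {a // P a} → β, ∑ f₂ : {a // ¬ P a} → β,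
          F (fun a => if h : P a then f₁ ⟨a, h⟩ else f₂ ⟨a, h⟩) := by
  let e : (({a // P a} → β) × ({a // ¬ P a} → β)) ≃ (α → β) :=
    { toFun := fun fp a => if h : P a then fp.1 ⟨a, h⟩ else fp.2 ⟨a, h⟩
      invFun := fun f => (fun t => f t.1, fun t => f t.1)
      left_inv := by
        rintro ⟨f₁, f₂⟩
        refine Prod.ext (funext fun t => ?_) (funext fun t => ?_)
        · simp [t.2]
        · simp [t.2]
      right_inv := by
        intro f
        funext a
        by_cases h : P a <;> simp [h] }
  rw [← Equiv.sum_comp e F, Fintype.sum_prod_type]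
  rfl



/-- Per-run classification: `0` = all bits `false` (fully preserved),
`2` = all bits `true` (fully deleted), `1` = partial. -/
noncomputable def cl1 {J : Type*} [Fintype J] (f : J → Bool) : Fin 3 :=
  if ∀ j, f j = false then 0 else if ∀ j, f j = true then 2 else 1

lemma cl1_eq_zero {J : Type*} [Fintype J] (f : J → Bool) :
    cl1 f = 0 ↔ ∀ j, f j = false := by
  unfold cl1
  split_ifs with h1 h2 <;> simp_all
lemma cl1_eq_one {J : Type*} [Fintype J] (f : J → Bool) :
    cl1 f = 1 ↔ (¬ ∀ j, f j = false) ∧ ¬ ∀ j, f j = true := by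
  unfold cl1
  split_ifs with h1 h2 <;> simp_all
lemma cl1_eq_two {J : Type*} [Fintype J] [Nonempty J] (f : J → Bool) :
    cl1 f = 2 ↔ ∀ j, f j = true := by
  unfold cl1
  split_ifs with h1 h2
  · constructor
    · intro h; exact absurd h (by decide)
    · intro h
      exact absurd (h1 (Classical.arbitrary J)) (by simp [h (Classical.arbitrary J)])
  · simp [h2]
  · constructor
    · intro h; exact absurd h (by decide)
    · intro h; exact absurd h h2
lemma cl1_ne_two {J : Type*} [Fintype J] [Nonempty J] (f : J → Bool) :
    cl1 f ≠ 2 ↔ ∃ j, f j = false := by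
  rw [Ne, cl1_eq_two]
  push_neg
  simp

section Weights
variable (p : ℝ≥0∞)

/-- Weight of a single bit: `true` (deleted) has probability `p`. -/
noncomputable def bw : Bool → ℝ≥0∞ := fun b => cond b p (1 - p)

lemma sum_bw (hp : p ≤ 1) : ∑ b : Bool, bw p b = 1 := by
  rw [Fintype.sum_bool]
  exact add_tsub_cancel_of_le hp

variable {J : Type*} [Fintype J] [DecidableEq J]

/-- Total weight of all bit patterns on a run is `1`. -/
lemma sum_bw_total (hp : p ≤ 1) :
    ∑ f : J → Bool, ∏ j, bw p (f j) = 1 := by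
  rw [sum_pi_prod]
  rw [Finset.prod_congr rfl fun j _ => sum_bw p hp]
  simp

/-- Weight of the constant pattern extraction. -/
lemma sum_ind_eq_fun {α : Type*} [Fintype α] (c₀ : α) (h : α → ℝ≥0∞) :
    ∑ c, ind (c₀ = c) * h c = h c₀ := by
  rw [← sum_ind_eq c₀ h]
  exact Fintype.sum_congr _ _ fun c => by rw [ind_congr eq_comm]

lemma sum_bw_cl0 :
    ∑ f : J → Bool, ind (cl1 f = 0) * ∏ j, bw p (f j) = (1 - p) ^ Fintype.card J := by
  have : ∀ f : J → Bool, ind (cl1 f = 0) * ∏ j, bw p (f j)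
      = ind (f = fun _ => false) * ∏ j, bw p (f j) := by
    intro f
    congr 1
    refine ind_congr ?_
    rw [cl1_eq_zero, funext_iff]
  rw [Fintype.sum_congr _ _ this, Finset.sum_congr rfl
    (fun f _ => by rw [ind_congr (eq_comm (a := f))]), sum_ind_eq_fun]
  simp [bw]

lemma sum_bw_cl2 [Nonempty J] :
    ∑ f : J → Bool, ind (cl1 f = 2) * ∏ j, bw p (f j) = p ^ Fintype.card J := by
  have : ∀ f : J → Bool, ind (cl1 f = 2) * ∏ j, bw p (f j)
      = ind (f = fun _ => true) * ∏ j, bw p (f j) := by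
    intro f
    congr 1
    refine ind_congr ?_
    rw [cl1_eq_two, funext_iff]
  rw [Fintype.sum_congr _ _ this, Finset.sum_congr rfl
    (fun f _ => by rw [ind_congr (eq_comm (a := f))]), sum_ind_eq_fun]
  simp [bw]


/-- Per-run weights of the three classes. -/
noncomputable def Uw (J : Type*) [Fintype J] [DecidableEq J] (r : Fin 3) : ℝ≥0∞ :=
  ∑ f : J → Bool, ind (cl1 f = r) * ∏ j, bw p (f j)

lemma Uw_zero : Uw p J 0 = (1 - p) ^ Fintype.card J := sum_bw_cl0 p

lemma Uw_two [Nonempty J] : Uw p J 2 = p ^ Fintype.card J := sum_bw_cl2 p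

lemma Uw_sum (hp : p ≤ 1) : Uw p J 0 + Uw p J 1 + Uw p J 2 = 1 := by
  have h : ∑ r : Fin 3, Uw p J r = 1 := by
    unfold Uw
    rw [Finset.sum_comm]
    rw [Finset.sum_congr rfl fun f _ => sum_ind_eq_fun (cl1 f) fun _ => ∏ j, bw p (f j)]
    exact sum_bw_total p hp
  rwa [Fin.sum_univ_three] at h

lemma Uw_le_one (hp : p ≤ 1) (r : Fin 3) : Uw p J r ≤ 1 := by
  have h : ∑ r : Fin 3, Uw p J r = 1 := by
    rw [Fin.sum_univ_three]; exact Uw_sum p hp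
  calc Uw p J r ≤ ∑ r : Fin 3, Uw p J r :=
        Finset.single_le_sum (fun _ _ => zero_le) (mem_univ r)
    _ = 1 := h

lemma Uw_ne_top (hp : p ≤ 1) (r : Fin 3) : Uw p J r ≠ ∞ :=
  ne_top_of_le_ne_top one_ne_top (Uw_le_one p hp r)

lemma Uw_01 (hp : p ≤ 1) : Uw p J 0 + Uw p J 1 = 1 - Uw p J 2 :=
  ENNReal.eq_sub_of_add_eq (Uw_ne_top p hp 2) (Uw_sum p hp)

end Weights

/-- Sum over one "good" trace-column: probability some value is `2`. -/
lemma sum_exists_two {ι : Type*} [Fintype ι] [DecidableEq ι] (u : ι → Fin 3 → ℝ≥0∞)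
    (h1 : ∀ i, u i 0 + u i 1 + u i 2 = 1) :
    ∑ v : ι → Fin 3, ind (∃ i, v i = 2) * ∏ i, u i (v i)
      = 1 - ∏ i, (u i 0 + u i 1) := by
  have htot : ∑ v : ι → Fin 3, ∏ i, u i (v i) = 1 := by
    rw [sum_pi_prod]
    rw [Finset.prod_congr rfl fun i _ => by rw [Fin.sum_univ_three, h1 i]]
    simp
  have hforall : ∑ v : ι → Fin 3, ind (∀ i, v i ≠ 2) * ∏ i, u i (v i)
      = ∏ i, (u i 0 + u i 1) := by
    rw [sum_ind_pi (β := fun _ : ι => Fin 3) (fun _ r => r ≠ 2) fun i r => u i r]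
    refine Finset.prod_congr rfl fun i _ => ?_
    rw [Fin.sum_univ_three, ind_pos (show (0:Fin 3) ≠ 2 by decide),
      ind_pos (show (1:Fin 3) ≠ 2 by decide),
      ind_neg (show ¬ (2:Fin 3) ≠ 2 by simp), one_mul, one_mul, zero_mul, add_zero]
  have hle : (∏ i, (u i 0 + u i 1)) ≤ 1 := by
    refine Finset.prod_le_one (fun _ _ => zero_le) fun i _ => ?_
    rw [← h1 i]; exact le_self_add
  have := sum_ind_not (fun v : ι → Fin 3 => ∀ i, v i ≠ 2) (fun v => ∏ i, u i (v i))
    (by rw [hforall]; exact ne_top_of_le_ne_top one_ne_top hle)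
  rw [htot, hforall] at this
  rw [← this]
  refine Fintype.sum_congr _ _ fun v => ?_
  congr 1
  refine ind_congr ?_
  push_neg
  simp

/-- Sum over the column of one run across good traces, requiring coverage. -/
lemma sum_cover {γ : Type*} [Fintype γ] [DecidableEq γ] (u : Fin 3 → ℝ≥0∞) (hu : ∀ r, u r ≤ 1) :
    ∑ h : γ → Fin 3, ind ((∀ t, h t ≠ 2) ∧ ∃ t, h t = 0) * ∏ t, u (h t)
      = (u 0 + u 1) ^ Fintype.card γ - u 1 ^ Fintype.card γ := by
  have e1 : ∑ h : γ → Fin 3, ind (∀ t, h t ≠ 2) * ∏ t, u (h t)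
      = (u 0 + u 1) ^ Fintype.card γ := by
    rw [sum_ind_pi (β := fun _ : γ => Fin 3) (fun _ r => r ≠ 2) fun _ r => u r]
    rw [Finset.prod_congr rfl fun t _ => by
      rw [Fin.sum_univ_three, ind_pos (show (0:Fin 3) ≠ 2 by decide),
        ind_pos (show (1:Fin 3) ≠ 2 by decide),
        ind_neg (show ¬ (2:Fin 3) ≠ 2 by simp), one_mul, one_mul, zero_mul, add_zero]]
    rw [Finset.prod_const, Finset.card_univ]
  have e2 : ∑ h : γ → Fin 3, ind (∀ t, h t = 1) * ∏ t, u (h t)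
      = u 1 ^ Fintype.card γ := by
    rw [sum_ind_pi (β := fun _ : γ => Fin 3) (fun _ r => r = 1) fun _ r => u r]
    rw [Finset.prod_congr rfl fun t _ => by
      rw [Fin.sum_univ_three, ind_pos (by decide : (1:Fin 3) = 1),
        ind_neg (by decide : ¬ (0:Fin 3) = 1), ind_neg (by decide : ¬ (2:Fin 3) = 1),
        one_mul, zero_mul, zero_mul, zero_add, add_zero]]
    rw [Finset.prod_const, Finset.card_univ]
  have key : ∀ h : γ → Fin 3,
      ind ((∀ t, h t ≠ 2) ∧ ∃ t, h t = 0) + ind (∀ t, h t = 1) = ind (∀ t, h t ≠ 2) := by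
    intro h
    have h01 : (∀ t, h t = 1) ↔ ((∀ t, h t ≠ 2) ∧ ¬ ∃ t, h t = 0) := by
      constructor
      · intro H
        refine ⟨fun t => by rw [H t]; decide, ?_⟩
        rintro ⟨t, ht⟩
        rw [H t] at ht
        exact absurd ht (by decide)
      · rintro ⟨H1, H2⟩ t
        push_neg at H2
        have r1 := H1 t
        have r2 := H2 t
        revert r1 r2
        generalize h t = r
        revert r
        decide
    rw [ind_congr h01]
    by_cases hA : ∀ t, h t ≠ 2
    · by_cases hB : ∃ t, h t = 0
      · rw [ind_pos ⟨hA, hB⟩, ind_neg (by simp [hB]), add_zero, ind_pos hA]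
      · rw [ind_neg (by simp [hB]), ind_pos ⟨hA, hB⟩, zero_add, ind_pos hA]
    · rw [ind_neg (by simp [hA]), ind_neg (by simp [hA]), add_zero, ind_neg hA]
  have hsum : (∑ h : γ → Fin 3, ind ((∀ t, h t ≠ 2) ∧ ∃ t, h t = 0) * ∏ t, u (h t))
      + (∑ h : γ → Fin 3, ind (∀ t, h t = 1) * ∏ t, u (h t))
      = ∑ h : γ → Fin 3, ind (∀ t, h t ≠ 2) * ∏ t, u (h t) := by
    rw [← Finset.sum_add_distrib]
    refine Fintype.sum_congr _ _ fun h => ?_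
    rw [← add_mul, key h]
  rw [e1, e2] at hsum
  exact ENNReal.eq_sub_of_add_eq
    (ne_top_of_le_ne_top one_ne_top (pow_le_one' (hu 1) _)) hsum

/-- The key per-run algebraic identity in `ℝ≥0∞`. -/
lemma per_run (a m : ℝ≥0∞) (ha : a ≠ ∞) (hm : m ≠ ∞) (c : ℕ) :
    (1 - (1 - a / (a + m)) ^ c) * (a + m) ^ c = (a + m) ^ c - m ^ c := by
  rcases eq_or_ne (a + m) 0 with h0 | hne
  · obtain ⟨rfl, rfl⟩ := add_eq_zero.mp h0
    simp
  · have hnetop : a + m ≠ ∞ := ENNReal.add_ne_top.mpr ⟨ha, hm⟩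
    have hdiv : a / (a + m) + m / (a + m) = 1 := by
      rw [ENNReal.div_add_div_same, ENNReal.div_self hne hnetop]
    have h2 : 1 - a / (a + m) = m / (a + m) := by
      refine (ENNReal.eq_sub_of_add_eq ?_ ?_).symm
      · rw [div_eq_mul_inv]
        exact ENNReal.mul_ne_top ha (ENNReal.inv_ne_top.2 hne)
      · rw [add_comm]; exact hdiv
    rw [h2, div_eq_mul_inv, mul_pow, ← ENNReal.inv_pow, ← div_eq_mul_inv,
      ENNReal.sub_mul (fun _ _ => ENNReal.pow_ne_top hnetop), one_mul,
      ENNReal.div_mul_cancel (pow_ne_zero c hne) (ENNReal.pow_ne_top hnetop)]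

/-- Measure of any set in a finite discrete space as a finite sum. -/
lemma measure_discrete {α : Type*} [Fintype α] [MeasurableSpace α]
    [MeasurableSingletonClass α] (μ : Measure α) (S : Set α) :
    μ S = ∑ ω ∈ Finset.univ.filter (· ∈ S), μ {ω} := by
  have hS : S = ⋃ ω ∈ (Finset.univ.filter (· ∈ S) : Finset α), ({ω} : Set α) := by
    ext x; simp
  conv_lhs => rw [hS]
  rw [measure_biUnion_finset (fun x _ y _ hxy => Set.disjoint_singleton.mpr hxy)
    fun _ _ => measurableSet_singleton _]

lemma measure_discrete' {α : Type*} [Fintype α] [MeasurableSpace α]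
    [MeasurableSingletonClass α] (μ : Measure α) (S : Set α) :
    μ S = ∑ ω : α, ind (ω ∈ S) * μ {ω} := by
  rw [measure_discrete μ S, Finset.sum_filter]
  exact Finset.sum_congr rfl fun ω _ => (ind_mul_eq_ite _ _).symm

lemma pi_singleton {ι : Type*} [Fintype ι] {β : ι → Type*} [∀ i, MeasurableSpace (β i)]
    (ν : ∀ i, Measure (β i)) [∀ i, IsProbabilityMeasure (ν i)] (f : ∀ i, β i) :
    Measure.pi ν {f} = ∏ i, ν i {f i} := by
  rw [← Set.univ_pi_singleton f, Measure.pi_pi]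




section Reduce
variable (p : ℝ≥0∞) {M T' : ℕ} {ℓ : Fin M → ℕ}

/-- Classification of a full trace, run by run. -/
noncomputable def cls (v : (Σ i : Fin M, Fin (ℓ i)) → Bool) : Fin M → Fin 3 :=
  fun i => cl1 (fun j => v ⟨i, j⟩)

lemma sum_cls (m : Fin M → Fin 3) :
    ∑ v : (Σ i : Fin M, Fin (ℓ i)) → Bool, ind (cls v = m) * ∏ k, bw p (v k)
      = ∏ i, Uw p (Fin (ℓ i)) (m i) := by
  rw [← Equiv.sum_comp (Equiv.piCurry fun (i : Fin M) (_ : Fin (ℓ i)) => Bool).symm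
    (fun v : (Σ i : Fin M, Fin (ℓ i)) → Bool => ind (cls v = m) * ∏ k, bw p (v k))]
  simp only [Equiv.piCurry_symm_apply]
  have step : ∀ u : ∀ i : Fin M, Fin (ℓ i) → Bool,
      ind (cls (Sigma.uncurry u) = m) * ∏ k, bw p (Sigma.uncurry u k)
        = ind (∀ i, cl1 (u i) = m i) * ∏ i, ∏ j, bw p (u i j) := by
    intro u
    congr 1
    · refine ind_congr ?_
      rw [funext_iff]
      refine forall_congr' fun i => ?_
      have : cls (M := M) (ℓ := ℓ) (Sigma.uncurry u) i = cl1 (u i) := rfl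
      rw [this]
    · rw [← Finset.univ_sigma_univ, Finset.prod_sigma]
      rfl
  rw [Fintype.sum_congr _ _ step]
  rw [sum_ind_pi (β := fun i : Fin M => Fin (ℓ i) → Bool)
    (fun i f => cl1 f = m i) (fun i f => ∏ j, bw p (f j))]
  rfl

lemma reduce (hℓ : ∀ i, 1 ≤ ℓ i) :
    ∑ ω : Fin T' → (Σ i : Fin M, Fin (ℓ i)) → Bool,
        ind (∀ i, ∃ t, (∀ j : Fin (ℓ i), ω t ⟨i, j⟩ = false) ∧
          (∀ i', ∃ j' : Fin (ℓ i'), ω t ⟨i', j'⟩ = false)) * ∏ t, ∏ k, bw p (ω t k)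
      = ∑ c : Fin T' → Fin M → Fin 3,
          ind (∀ i, ∃ t, c t i = 0 ∧ ∀ i', c t i' ≠ 2) *
            ∏ t, ∏ i, Uw p (Fin (ℓ i)) (c t i) := by
  have hne : ∀ i : Fin M, Nonempty (Fin (ℓ i)) := fun i => ⟨⟨0, hℓ i⟩⟩
  have hEE : ∀ ω : Fin T' → (Σ i : Fin M, Fin (ℓ i)) → Bool,
      (∀ i, ∃ t, (∀ j : Fin (ℓ i), ω t ⟨i, j⟩ = false) ∧
          (∀ i', ∃ j' : Fin (ℓ i'), ω t ⟨i', j'⟩ = false))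
        ↔ (∀ i, ∃ t, cls (ω t) i = 0 ∧ ∀ i', cls (ω t) i' ≠ 2) := by
    intro ω
    refine forall_congr' fun i => exists_congr fun t =>
      and_congr ?_ (forall_congr' fun i' => ?_)
    · exact (cl1_eq_zero _).symm
    · haveI := hne i'
      exact (cl1_ne_two (fun j => ω t ⟨i', j⟩)).symm
  have step1 : ∀ ω : Fin T' → (Σ i : Fin M, Fin (ℓ i)) → Bool,
      ind (∀ i, ∃ t, (∀ j : Fin (ℓ i), ω t ⟨i, j⟩ = false) ∧
          (∀ i', ∃ j' : Fin (ℓ i'), ω t ⟨i', j'⟩ = false)) * ∏ t, ∏ k, bw p (ω t k)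
        = ∑ c : Fin T' → Fin M → Fin 3,
            ind (∀ i, ∃ t, c t i = 0 ∧ ∀ i', c t i' ≠ 2) *
              (ind (∀ t, cls (ω t) = c t) * ∏ t, ∏ k, bw p (ω t k)) := by
    intro ω
    have : ∀ c : Fin T' → Fin M → Fin 3,
        ind (∀ i, ∃ t, c t i = 0 ∧ ∀ i', c t i' ≠ 2) *
            (ind (∀ t, cls (ω t) = c t) * ∏ t, ∏ k, bw p (ω t k))
          = ind ((fun t => cls (ω t)) = c) *
              (ind (∀ i, ∃ t, c t i = 0 ∧ ∀ i', c t i' ≠ 2) * ∏ t, ∏ k, bw p (ω t k)) := by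
      intro c
      rw [ind_congr (funext_iff (f := fun t => cls (ω t)) (g := c)).symm]
      ring
    rw [Fintype.sum_congr _ _ this, sum_ind_eq_fun (fun t => cls (ω t))
      (fun c => ind (∀ i, ∃ t, c t i = 0 ∧ ∀ i', c t i' ≠ 2) * ∏ t, ∏ k, bw p (ω t k)),
      ind_congr (hEE ω)]
  rw [Fintype.sum_congr _ _ step1, Finset.sum_comm]
  refine Fintype.sum_congr _ _ fun c => ?_
  rw [← Finset.mul_sum]
  congr 1
  rw [sum_ind_pi (β := fun _ : Fin T' => (Σ i : Fin M, Fin (ℓ i)) → Bool)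
    (fun t v => cls v = c t) (fun _ v => ∏ k, bw p (v k))]
  exact Finset.prod_congr rfl fun t _ => sum_cls p (c t)

end Reduce

lemma ind_mul_ind_congr {P Q Q' : Prop} (h : P → (Q ↔ Q')) (X : ℝ≥0∞) :
    ind P * (ind Q * X) = ind P * (ind Q' * X) := by
  by_cases hP : P
  · rw [ind_congr (h hP)]
  · rw [ind_neg hP, zero_mul, zero_mul]

section Core
variable {M T : ℕ} (U : Fin M → Fin 3 → ℝ≥0∞)

lemma coreP (hsum : ∀ i, U i 0 + U i 1 + U i 2 = 1) (P : Fin T → Prop) (n : ℕ)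
    (hn : Fintype.card {a // P a} = n) :
    ∑ c : Fin T → Fin M → Fin 3,
        ind (∀ t, ((∀ i, c t i ≠ 2) ↔ P t)) *
          (ind (∀ i, ∃ t, P t ∧ c t i = 0) * ∏ t, ∏ i, U i (c t i))
      = (∏ i, ((U i 0 + U i 1) ^ n - U i 1 ^ n)) *
          (1 - ∏ i, (U i 0 + U i 1)) ^ (T - n) := by
  subst hn
  have hle : ∀ i r, U i r ≤ 1 := by
    intro i r
    rw [← hsum i]
    fin_cases r
    · exact le_trans le_self_add le_self_add
    · exact le_trans le_add_self le_self_add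
    · exact le_add_self
  rw [sum_split P
    (fun c : Fin T → Fin M → Fin 3 => ind (∀ t, ((∀ i, c t i ≠ 2) ↔ P t)) *
      (ind (∀ i, ∃ t, P t ∧ c t i = 0) * ∏ t, ∏ i, U i (c t i)))]
  have heval : ∀ (c₁ : {a // P a} → Fin M → Fin 3) (c₂ : {a // ¬ P a} → Fin M → Fin 3),
      ind (∀ t, ((∀ i, (fun a => if h : P a then c₁ ⟨a, h⟩ else c₂ ⟨a, h⟩) t i ≠ 2) ↔ P t)) *
        (ind (∀ i, ∃ t, P t ∧ (fun a => if h : P a then c₁ ⟨a, h⟩ else c₂ ⟨a, h⟩) t i = 0) *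
          ∏ t, ∏ i, U i ((fun a => if h : P a then c₁ ⟨a, h⟩ else c₂ ⟨a, h⟩) t i))
      = (ind (∀ i, ((∀ t : {a // P a}, c₁ t i ≠ 2) ∧ ∃ t : {a // P a}, c₁ t i = 0)) *
          ∏ i, ∏ t : {a // P a}, U i (c₁ t i)) *
        (ind (∀ t : {a // ¬ P a}, ∃ i, c₂ t i = 2) *
          ∏ t : {a // ¬ P a}, ∏ i, U i (c₂ t i)) := by
    intro c₁ c₂
    have hmemb : ind (∀ t, ((∀ i, (fun a => if h : P a then c₁ ⟨a, h⟩ else c₂ ⟨a, h⟩) t i ≠ 2)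
          ↔ P t))
        = ind (∀ t : {a // P a}, ∀ i, c₁ t i ≠ 2) *
          ind (∀ t : {a // ¬ P a}, ∃ i, c₂ t i = 2) := by
      rw [ind_mul_ind]
      refine ind_congr ?_
      rw [forall_split P]
      refine and_congr (forall_congr' fun t => ?_) (forall_congr' fun t => ?_)
      · simp [t.2]
      · simp [t.2, not_forall]
    have hcov : ind (∀ i, ∃ t, P t ∧ (fun a => if h : P a then c₁ ⟨a, h⟩ else c₂ ⟨a, h⟩) t i = 0)
        = ind (∀ i, ∃ t : {a // P a}, c₁ t i = 0) := by
      refine ind_congr (forall_congr' fun i => ?_)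
      constructor
      · rintro ⟨t, ht, h0⟩
        refine ⟨⟨t, ht⟩, ?_⟩
        simp only [dif_pos ht] at h0
        exact h0
      · rintro ⟨t, h0⟩
        refine ⟨t.1, t.2, ?_⟩
        simp only [dif_pos t.2]
        simpa using h0
    have hw : (∏ t, ∏ i, U i ((fun a => if h : P a then c₁ ⟨a, h⟩ else c₂ ⟨a, h⟩) t i))
        = (∏ t : {a // P a}, ∏ i, U i (c₁ t i)) *
          ∏ t : {a // ¬ P a}, ∏ i, U i (c₂ t i) := by
      rw [← Fintype.prod_subtype_mul_prod_subtype P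
        (fun t => ∏ i, U i ((fun a => if h : P a then c₁ ⟨a, h⟩ else c₂ ⟨a, h⟩) t i))]
      congr 1
      · exact Finset.prod_congr rfl fun t _ => by simp [t.2]
      · exact Finset.prod_congr rfl fun t _ => by simp [t.2]
    have hsplit : ind (∀ i, ((∀ t : {a // P a}, c₁ t i ≠ 2) ∧ ∃ t : {a // P a}, c₁ t i = 0))
        = ind (∀ t : {a // P a}, ∀ i, c₁ t i ≠ 2) *
          ind (∀ i, ∃ t : {a // P a}, c₁ t i = 0) := by
      rw [ind_mul_ind]
      refine ind_congr ?_
      constructor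
      · exact fun h => ⟨fun t i => (h i).1 t, fun i => (h i).2⟩
      · exact fun h i => ⟨fun t => h.1 t i, h.2 i⟩
    have hprod : (∏ i, ∏ t : {a // P a}, U i (c₁ t i))
        = ∏ t : {a // P a}, ∏ i, U i (c₁ t i) := Finset.prod_comm
    rw [hmemb, hcov, hw, hsplit, hprod]
    ring
  rw [Finset.sum_congr rfl fun c₁ _ => Finset.sum_congr rfl fun c₂ _ => heval c₁ c₂]
  rw [← Finset.sum_mul_sum]
  congr 1
  · rw [← Equiv.sum_comp (Equiv.piComm fun (_ : Fin M) (_ : {a // P a}) => Fin 3)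
      (fun c₁ : {a // P a} → Fin M → Fin 3 =>
        ind (∀ i, ((∀ t : {a // P a}, c₁ t i ≠ 2) ∧ ∃ t : {a // P a}, c₁ t i = 0)) *
          ∏ i, ∏ t : {a // P a}, U i (c₁ t i))]
    simp only [Equiv.piComm_apply, Function.swap]
    rw [sum_ind_pi (β := fun _ : Fin M => {a // P a} → Fin 3)
      (fun _ h => (∀ t, h t ≠ 2) ∧ ∃ t, h t = 0) (fun i h => ∏ t, U i (h t))]
    refine Finset.prod_congr rfl fun i _ => ?_
    rw [sum_cover (U i) (hle i)]
  · rw [sum_ind_pi (β := fun _ : {a // ¬ P a} => Fin M → Fin 3)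
      (fun _ v => ∃ i, v i = 2) (fun _ v => ∏ i, U i (v i))]
    rw [Finset.prod_congr rfl fun t _ => sum_exists_two U hsum]
    rw [Finset.prod_const, Finset.card_univ, Fintype.card_subtype_compl,
      Fintype.card_fin]

lemma core (hsum : ∀ i, U i 0 + U i 1 + U i 2 = 1) :
    ∑ c : Fin T → Fin M → Fin 3,
        ind (∀ i, ∃ t, c t i = 0 ∧ ∀ i', c t i' ≠ 2) * ∏ t, ∏ i, U i (c t i)
      = ∑ n ∈ Finset.range (T + 1), (T.choose n : ℝ≥0∞) *
          ((∏ i, ((U i 0 + U i 1) ^ n - U i 1 ^ n)) *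
            (1 - ∏ i, (U i 0 + U i 1)) ^ (T - n)) := by
  have part : ∀ c : Fin T → Fin M → Fin 3,
      ind (∀ i, ∃ t, c t i = 0 ∧ ∀ i', c t i' ≠ 2) * ∏ t, ∏ i, U i (c t i)
        = ∑ S : Finset (Fin T), ind ((Finset.univ.filter fun t => ∀ i, c t i ≠ 2) = S) *
            (ind (∀ i, ∃ t, c t i = 0 ∧ ∀ i', c t i' ≠ 2) * ∏ t, ∏ i, U i (c t i)) :=
    fun c => (sum_ind_eq_fun (Finset.univ.filter fun t => ∀ i, c t i ≠ 2)
      (fun _ => ind (∀ i, ∃ t, c t i = 0 ∧ ∀ i', c t i' ≠ 2) *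
        ∏ t, ∏ i, U i (c t i))).symm
  rw [Fintype.sum_congr _ _ part, Finset.sum_comm]
  have slice : ∀ S : Finset (Fin T),
      (∑ c : Fin T → Fin M → Fin 3,
        ind ((Finset.univ.filter fun t => ∀ i, c t i ≠ 2) = S) *
          (ind (∀ i, ∃ t, c t i = 0 ∧ ∀ i', c t i' ≠ 2) * ∏ t, ∏ i, U i (c t i)))
        = (∏ i, ((U i 0 + U i 1) ^ S.card - U i 1 ^ S.card)) *
            (1 - ∏ i, (U i 0 + U i 1)) ^ (T - S.card) := by
    intro S
    have hpt : ∀ c : Fin T → Fin M → Fin 3,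
        ind ((Finset.univ.filter fun t => ∀ i, c t i ≠ 2) = S) *
            (ind (∀ i, ∃ t, c t i = 0 ∧ ∀ i', c t i' ≠ 2) * ∏ t, ∏ i, U i (c t i))
          = ind (∀ t, ((∀ i, c t i ≠ 2) ↔ t ∈ S)) *
              (ind (∀ i, ∃ t, t ∈ S ∧ c t i = 0) * ∏ t, ∏ i, U i (c t i)) := by
      intro c
      have h1 : ((Finset.univ.filter fun t => ∀ i, c t i ≠ 2) = S)
          ↔ (∀ t, ((∀ i, c t i ≠ 2) ↔ t ∈ S)) := by
        rw [Finset.ext_iff]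
        exact forall_congr' fun t => by simp [Finset.mem_filter]
      rw [ind_congr h1]
      refine ind_mul_ind_congr (fun hm => ?_) _
      refine forall_congr' fun i => exists_congr fun t => ?_
      constructor
      · rintro ⟨h0, hg⟩; exact ⟨(hm t).1 hg, h0⟩
      · rintro ⟨hS, h0⟩; exact ⟨h0, (hm t).2 hS⟩
    rw [Fintype.sum_congr _ _ hpt,
      coreP U hsum (· ∈ S) S.card (by
        convert Fintype.card_of_subtype S fun x => Iff.rfl using 2)]
  rw [Finset.sum_congr rfl fun S _ => slice S]
  rw [← Finset.powerset_univ]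
  rw [Finset.sum_powerset_apply_card
    (fun n => (∏ i, ((U i 0 + U i 1) ^ n - U i 1 ^ n)) *
      (1 - ∏ i, (U i 0 + U i 1)) ^ (T - n))]
  rw [Finset.card_univ, Fintype.card_fin]
  exact Finset.sum_congr rfl fun n _ => by rw [nsmul_eq_mul]

end Core

end ProbE3aux

open ProbE3aux

/-- **Probability of the sufficient event E₃.**  Model: `s` has `M` runs with
lengths `ℓ i` and `T` i.i.d. traces are generated by `Del_p` (each bit deleted,
`= true`, independently with probability `p`).  If `E₃` is the event that for
every run `i` some trace fully preserves run `i` while fully deleting no run,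
then, with `q = ∏ k, (1 - p^{ℓ k})`,
`P(E₃) = ∑_{c=0}^{T} C(T,c) ∏ i (1 - (1 - (1-p)^{ℓ i}/(1-p^{ℓ i}))^c) q^c (1-q)^{T-c}`. -/
theorem prob_sufficient_event
    (M T : ℕ) (ℓ : Fin M → ℕ) (hℓ : ∀ i, 1 ≤ ℓ i)
    (p : ℝ≥0∞) (hp : p ≤ 1)
    (μ : Measure (Fin T → (Σ i : Fin M, Fin (ℓ i)) → Bool))
    (hμ : μ = Measure.pi fun _ =>
      Measure.pi fun _ => (PMF.bernoulli p.toNNReal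
        (by simpa using ENNReal.toNNReal_mono ENNReal.one_ne_top hp)).toMeasure)
    (q : ℝ≥0∞) (hq : q = ∏ k : Fin M, (1 - p ^ ℓ k)) :
    μ {ω | ∀ i : Fin M, ∃ t : Fin T,
        (∀ j : Fin (ℓ i), ω t ⟨i, j⟩ = false) ∧
        (∀ i' : Fin M, ∃ j' : Fin (ℓ i'), ω t ⟨i', j'⟩ = false)} =
      ∑ c ∈ Finset.range (T + 1), (T.choose c : ℝ≥0∞) *
        (∏ i : Fin M, (1 - (1 - (1 - p) ^ ℓ i / (1 - p ^ ℓ i)) ^ c)) *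
        q ^ c * (1 - q) ^ (T - c) := by
  subst hμ hq
  have hne : ∀ i : Fin M, Nonempty (Fin (ℓ i)) := fun i => ⟨⟨0, hℓ i⟩⟩
  rw [measure_discrete']
  have hsingle : ∀ ω : Fin T → (Σ i : Fin M, Fin (ℓ i)) → Bool,
      (Measure.pi fun _ => Measure.pi fun _ => (PMF.bernoulli p.toNNReal
        (by simpa using ENNReal.toNNReal_mono ENNReal.one_ne_top hp)).toMeasure) {ω}
        = ∏ t, ∏ k, bw p (ω t k) := by
    intro ω
    rw [pi_singleton]
    refine Finset.prod_congr rfl fun t _ => ?_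
    rw [pi_singleton]
    refine Finset.prod_congr rfl fun k _ => ?_
    rw [PMF.toMeasure_apply_singleton _ _ (measurableSet_singleton _)]
    have hpt : ((p.toNNReal : ℝ≥0∞)) = p := ENNReal.coe_toNNReal (ne_top_of_le_ne_top one_ne_top hp)
    cases ω t k <;> exact (PMF.bernoulli_apply (p := p.toNNReal) _ _).trans (by simp [bw, ENNReal.coe_sub, hpt])
  rw [Finset.sum_congr rfl fun ω _ => by rw [hsingle ω]]
  show (∑ ω : Fin T → (Σ i : Fin M, Fin (ℓ i)) → Bool,
      ind (∀ i : Fin M, ∃ t : Fin T, (∀ j : Fin (ℓ i), ω t ⟨i, j⟩ = false) ∧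
        (∀ i' : Fin M, ∃ j' : Fin (ℓ i'), ω t ⟨i', j'⟩ = false)) *
        ∏ t, ∏ k, bw p (ω t k)) = _
  rw [reduce p hℓ]
  rw [core (fun i r => Uw p (Fin (ℓ i)) r) (fun i => Uw_sum p hp)]
  have hA : ∀ i, Uw p (Fin (ℓ i)) 0 + Uw p (Fin (ℓ i)) 1 = 1 - p ^ ℓ i := by
    intro i
    haveI := hne i
    rw [Uw_01 p hp, Uw_two p, Fintype.card_fin]
  have ha : ∀ i, Uw p (Fin (ℓ i)) 0 = (1 - p) ^ ℓ i := by
    intro i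
    rw [Uw_zero p, Fintype.card_fin]
  refine Finset.sum_congr rfl fun n _ => ?_
  have hper : ∀ i, (Uw p (Fin (ℓ i)) 0 + Uw p (Fin (ℓ i)) 1) ^ n - Uw p (Fin (ℓ i)) 1 ^ n
      = (1 - (1 - (1 - p) ^ ℓ i / (1 - p ^ ℓ i)) ^ n) * (1 - p ^ ℓ i) ^ n := by
    intro i
    rw [← ha i, ← hA i]
    exact (per_run _ _ (Uw_ne_top p hp 0) (Uw_ne_top p hp 1) n).symm
  have hprod1 : (∏ i, ((Uw p (Fin (ℓ i)) 0 + Uw p (Fin (ℓ i)) 1) ^ n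
        - Uw p (Fin (ℓ i)) 1 ^ n))
      = (∏ i, (1 - (1 - (1 - p) ^ ℓ i / (1 - p ^ ℓ i)) ^ n)) *
          (∏ k, (1 - p ^ ℓ k)) ^ n := by
    rw [Finset.prod_congr rfl fun i _ => hper i, Finset.prod_mul_distrib, Finset.prod_pow]
  have hprod2 : (∏ i, (Uw p (Fin (ℓ i)) 0 + Uw p (Fin (ℓ i)) 1)) = ∏ k, (1 - p ^ ℓ k) :=
    Finset.prod_congr rfl fun i _ => hA i
  rw [hprod1, hprod2]
  ring
end
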